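/- Suppose a sequence of vectors a^n in the plane perpendicular to b satisfies a^{n+1} = a^n + d^n, where the displacement d^n has magnitude alternating between two fixed values D and δ (D for even n, δ for odd n) and each d^{n+1} is the rotation of d^n (rescaled to the appropriate magnitude) by a fixed angle φ ∈ (0, π) about b. Then all points a^n lie on a single circle of radius r = (1/2)√(D² + δ² + 2Dδ cos φ)/|sin φ|. -/

import Mathlib

open Real Filter

noncomputable def cross (a b : EuclideanSpace ℝ (Fin 3)) : EuclideanSpace ℝ (Fin 3) :=
  WithLp.toLp 2 ![a 1 * b 2 - a 2 * b 1, a 2 * b 0 - a 0 * b 2, a 0 * b 1 - a 1 * b 0]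

/-!
In the plane orthogonal to `b`, `J = cross b` is the rotation by `π / 2`, and the unit directions
`uₙ` of the steps satisfy `uₙ₊₁ = cos φ • uₙ + sin φ • J uₙ`. Writing `mₙ = ‖dₙ‖`, the point
`p = aₙ + (mₙ / 2) • uₙ + qₙ • J uₙ`, with `qₙ = (mₙ₊₁ + mₙ cos φ) / (2 sin φ)`, lies on the
perpendicular bisector of every step, and it does not depend on `n` because `m` is 2-periodic.
Its squared distance to `aₙ` is `(mₙ² + mₙ₊₁² + 2 mₙ mₙ₊₁ cos φ) / (4 sin² φ)`, which is symmetric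
in `mₙ, mₙ₊₁` and hence the same for every `n`.
-/

open Matrix WithLp

theorem EuclideanSpace.real_inner_eq_dotProduct {ι : Type*} [Fintype ι]
    (x y : EuclideanSpace ℝ ι) : inner ℝ x y = ofLp x ⬝ᵥ ofLp y := by
  rw [EuclideanSpace.inner_eq_star_dotProduct, star_trivial, dotProduct_comm]

open EuclideanSpace

theorem cross_eq_crossProduct (a b : EuclideanSpace ℝ (Fin 3)) :
    cross a b = toLp 2 (ofLp a ⨯₃ ofLp b) := rfl

theorem cross_add_smul (b x y : EuclideanSpace ℝ (Fin 3)) (r s : ℝ) :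
    cross b (r • x + s • y) = r • cross b x + s • cross b y := by
  simp [cross_eq_crossProduct]

theorem inner_self_cross (b x : EuclideanSpace ℝ (Fin 3)) : inner ℝ x (cross b x) = 0 := by
  rw [real_inner_eq_dotProduct, cross_eq_crossProduct, ofLp_toLp, dot_cross_self]

theorem inner_cross_cross (b x y : EuclideanSpace ℝ (Fin 3)) :
    inner ℝ (cross b x) (cross b y) = inner ℝ b b * inner ℝ x y - inner ℝ b y * inner ℝ x b := by
  simp only [real_inner_eq_dotProduct, cross_eq_crossProduct, cross_dot_cross]

theorem cross_cross_self (b x : EuclideanSpace ℝ (Fin 3)) :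
    cross b (cross b x) = inner ℝ b x • b - inner ℝ b b • x := by
  simp only [real_inner_eq_dotProduct, cross_eq_crossProduct, cross_cross_eq_smul_sub_smul',
    toLp_sub, toLp_smul, toLp_ofLp]

theorem norm_cross_of_inner_eq_zero {b x : EuclideanSpace ℝ (Fin 3)} (hb : ‖b‖ = 1)
    (hx : inner ℝ b x = 0) : ‖cross b x‖ = ‖x‖ := by
  have hsq : ‖cross b x‖ ^ 2 = ‖x‖ ^ 2 := by
    rw [← real_inner_self_eq_norm_sq, ← real_inner_self_eq_norm_sq, inner_cross_cross, hx,
      real_inner_self_eq_norm_sq b, hb]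
    ring
  exact (sq_eq_sq₀ (norm_nonneg _) (norm_nonneg _)).1 hsq

theorem cross_cross_of_inner_eq_zero {b x : EuclideanSpace ℝ (Fin 3)} (hb : ‖b‖ = 1)
    (hx : inner ℝ b x = 0) : cross b (cross b x) = -x := by
  rw [cross_cross_self, hx, real_inner_self_eq_norm_sq, hb, zero_smul, one_pow, one_smul,
    zero_sub]

theorem norm_smul_add_smul_of_orthonormal {E : Type*} [NormedAddCommGroup E]
    [InnerProductSpace ℝ E] {u w : E} (hu : ‖u‖ = 1) (hw : ‖w‖ = 1) (huw : inner ℝ u w = 0)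
    (x y : ℝ) : ‖x • u + y • w‖ = √(x ^ 2 + y ^ 2) := by
  have horth : inner ℝ (x • u) (y • w) = 0 := by
    rw [real_inner_smul_left, real_inner_smul_right, huw, mul_zero, mul_zero]
  have hsq : ‖x • u + y • w‖ ^ 2 = x ^ 2 + y ^ 2 := by
    rw [sq, norm_add_sq_eq_norm_sq_add_norm_sq_real horth, norm_smul, norm_smul, hu, hw, mul_one,
      mul_one, norm_eq_abs, norm_eq_abs, abs_mul_abs_self, abs_mul_abs_self, sq, sq]
  rw [← hsq, sqrt_sq (norm_nonneg _)]

theorem exists_center_of_rotating_steps {V : Type*} [AddCommGroup V] [Module ℝ V] {c s : ℝ}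
    (hs : s ≠ 0) (hcs : c ^ 2 + s ^ 2 = 1) {m : ℕ → ℝ} (hm : ∀ n, m (n + 2) = m n)
    {a u w : ℕ → V} (ha : ∀ n, a (n + 1) = a n + m n • u n)
    (hu : ∀ n, u (n + 1) = c • u n + s • w n) (hw : ∀ n, w (n + 1) = c • w n - s • u n) :
    ∃ p, ∀ n, p - a n = (m n / 2) • u n + ((m (n + 1) + m n * c) / (2 * s)) • w n := by
  refine ⟨a 0 + (m 0 / 2) • u 0 + ((m 1 + m 0 * c) / (2 * s)) • w 0, fun n => ?_⟩
  induction n with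
  | zero => abel
  | succ n ih =>
    rw [ha, ← sub_sub, ih, hu, hw, hm]
    match_scalars
    · field_simp; ring
    · field_simp; linear_combination -m (n + 1) * hcs

theorem sqrt_half_sq_add_sq {c s : ℝ} (hcs : c ^ 2 + s ^ 2 = 1) (hs : s ≠ 0) (x y : ℝ) :
    √((x / 2) ^ 2 + ((y + x * c) / (2 * s)) ^ 2) =
      1 / 2 * √(x ^ 2 + y ^ 2 + 2 * x * y * c) / |s| := by
  have hsum : (x / 2) ^ 2 + ((y + x * c) / (2 * s)) ^ 2 =
      (x ^ 2 + y ^ 2 + 2 * x * y * c) / (2 * s) ^ 2 := by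
    field_simp
    linear_combination x ^ 2 * hcs
  rw [hsum, sqrt_div' _ (sq_nonneg _), sqrt_sq_eq_abs, abs_mul, abs_two]
  ring

theorem stmt_13_general (b : EuclideanSpace ℝ (Fin 3)) (hb : ‖b‖ = 1)
    (D δ φ : ℝ) (hD : 0 < D) (hδ : 0 < δ) (hφ : φ ∈ Set.Ioo 0 Real.pi)
    (a d : ℕ → EuclideanSpace ℝ (Fin 3))
    (hdperp : ∀ n, (inner ℝ (d n) b : ℝ) = 0)
    (hmag : ∀ n, ‖d n‖ = if Even n then D else δ)
    (hrot : ∀ n, (‖d (n + 1)‖)⁻¹ • d (n + 1) =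
      Real.cos φ • ((‖d n‖)⁻¹ • d n) +
        Real.sin φ • cross b ((‖d n‖)⁻¹ • d n))
    (hstep : ∀ n, a (n + 1) = a n + d n) :
    ∃ c : EuclideanSpace ℝ (Fin 3), ∀ n,
      ‖a n - c‖ =
        1 / 2 * Real.sqrt (D ^ 2 + δ ^ 2 + 2 * D * δ * Real.cos φ) / |Real.sin φ| := by
  set u : ℕ → EuclideanSpace ℝ (Fin 3) := fun n => ‖d n‖⁻¹ • d n
  have hd_ne : ∀ n, d n ≠ 0 := fun n => norm_pos_iff.1 <| by
    rw [hmag]; split_ifs <;> assumption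
  have hu_norm : ∀ n, ‖u n‖ = 1 := fun n => norm_smul_inv_norm (hd_ne n)
  have hbu : ∀ n, inner ℝ b (u n) = 0 := fun n => by
    rw [real_inner_smul_right, real_inner_comm, hdperp, mul_zero]
  have hs : sin φ ≠ 0 := (sin_pos_of_pos_of_lt_pi hφ.1 hφ.2).ne'
  have hm : ∀ n, ‖d (n + 2)‖ = ‖d n‖ := fun n => by
    simp only [hmag, Nat.even_add, even_two, iff_true]
  have ha : ∀ n, a (n + 1) = a n + ‖d n‖ • u n := fun n => by
    rw [hstep, smul_inv_smul₀ (norm_ne_zero_iff.2 (hd_ne n))]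
  have hw : ∀ n, cross b (u (n + 1)) = cos φ • cross b (u n) - sin φ • u n := fun n => by
    rw [show u (n + 1) = cos φ • u n + sin φ • cross b (u n) from hrot n, cross_add_smul,
      cross_cross_of_inner_eq_zero hb (hbu n), smul_neg, sub_eq_add_neg]
  obtain ⟨p, hp⟩ := exists_center_of_rotating_steps hs (cos_sq_add_sin_sq φ) hm ha hrot hw
  have hradius : ∀ n, ‖d n‖ ^ 2 + ‖d (n + 1)‖ ^ 2 + 2 * ‖d n‖ * ‖d (n + 1)‖ * cos φ =
      D ^ 2 + δ ^ 2 + 2 * D * δ * cos φ := fun n => by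
    rcases Nat.even_or_odd n with hn | hn
    · simp [hmag, hn, Nat.even_add_one]
    · simp only [hmag, Nat.not_even_iff_odd.2 hn, ↓reduceIte, hn, Odd.add_one]
      ring
  refine ⟨p, fun n => ?_⟩
  rw [norm_sub_rev, hp, norm_smul_add_smul_of_orthonormal (hu_norm n)
    (by rw [norm_cross_of_inner_eq_zero hb (hbu n), hu_norm]) (inner_self_cross b (u n)),
    sqrt_half_sq_add_sq (cos_sq_add_sin_sq φ) hs, hradius]

/-- If the displacements of a planar sequence alternate in magnitude between D
(even steps) and δ (odd steps), and each displacement direction is the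
rotation of the previous one by a fixed angle φ about the unit normal b, then
all the points lie on a single circle of radius
(1/2)√(D² + δ² + 2Dδ cos φ)/|sin φ|. -/
theorem stmt_13 (b : EuclideanSpace ℝ (Fin 3)) (hb : ‖b‖ = 1)
    (D δ φ : ℝ) (hD : 0 < D) (hδ : 0 < δ) (hφ : φ ∈ Set.Ioo 0 Real.pi)
    (a d : ℕ → EuclideanSpace ℝ (Fin 3))
    (ha0 : (inner ℝ (a 0) b : ℝ) = 0)
    (hdperp : ∀ n, (inner ℝ (d n) b : ℝ) = 0)
    (hmag : ∀ n, ‖d n‖ = if Even n then D else δ)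
    (hrot : ∀ n, (‖d (n + 1)‖)⁻¹ • d (n + 1) =
      Real.cos φ • ((‖d n‖)⁻¹ • d n) +
        Real.sin φ • cross b ((‖d n‖)⁻¹ • d n))
    (hstep : ∀ n, a (n + 1) = a n + d n) :
    ∃ c : EuclideanSpace ℝ (Fin 3), ∀ n,
      ‖a n - c‖ =
        1 / 2 * Real.sqrt (D ^ 2 + δ ^ 2 + 2 * D * δ * Real.cos φ) / |Real.sin φ| :=
  stmt_13_general b hb D δ φ hD hδ hφ a d hdperp hmag hrot hstep
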